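/- arXiv:2508.02796 — 4 statements merged into one kernel-verified Lean document; each statement's English description precedes it below -/
import Mathlib

section
/- Let p ≥ 1 and let G : ℂ → ℂ be defined by G(z) = |z|^p z. Then G is real-Fréchet differentiable (viewing ℂ as ℝ²), and there exists a constant C = C(p) > 0 such that for all z, w ∈ ℂ the operator norm of the difference of derivatives satisfies ‖DG(z) − DG(w)‖ ≤ C (|z|^{p−1} + |w|^{p−1}) |z − w|. -/
open Real

private lemma aux_rpow_cont {p : ℝ} (hp : 1 ≤ p) : Continuous (fun t : ℝ => t ^ p) := by
  have : Differentiable ℝ (fun t : ℝ => t ^ p) := fun x =>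
    (Real.hasDerivAt_rpow_const (Or.inr hp)).differentiableAt
  exact this.continuous

private lemma aux_mvt1 {p a b : ℝ} (hp : 1 ≤ p) (hb : 0 ≤ b) (hab : b ≤ a) :
    a ^ p - b ^ p ≤ p * a ^ (p - 1) * (a - b) := by
  rcases eq_or_lt_of_le hab with rfl | h
  · simp
  · obtain ⟨c, hc, hceq⟩ := exists_hasDerivAt_eq_slope (fun t => t ^ p)
      (fun t => p * t ^ (p - 1)) h ((aux_rpow_cont hp).continuousOn)
      (fun x _ => Real.hasDerivAt_rpow_const (Or.inr hp))
    have hc0 : 0 ≤ c := le_of_lt (lt_of_le_of_lt hb hc.1)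
    have hcb : c ^ (p - 1) ≤ a ^ (p - 1) :=
      Real.rpow_le_rpow hc0 hc.2.le (by linarith)
    have hab0 : (0:ℝ) < a - b := sub_pos.mpr h
    have h1 : a ^ p - b ^ p = p * c ^ (p - 1) * (a - b) := by
      rw [hceq]; field_simp
    rw [h1]
    have hp0 : (0:ℝ) < p := by linarith
    have := mul_le_mul_of_nonneg_right (mul_le_mul_of_nonneg_left hcb hp0.le) hab0.le
    linarith


private lemma aux_mvt2 {p a b : ℝ} (hp : 1 ≤ p) (hb : 0 ≤ b) (hab : b ≤ a) :
    |a ^ (p - 2) - b ^ (p - 2)| * (b * b) ≤ |p - 2| * (a ^ (p - 1) + b ^ (p - 1)) * (a - b) := by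
  have ha1 : (0:ℝ) ≤ a ^ (p - 1) := Real.rpow_nonneg (le_trans hb hab) _
  have hb1 : (0:ℝ) ≤ b ^ (p - 1) := Real.rpow_nonneg hb _
  rcases eq_or_lt_of_le hb with rfl | hb0
  · simpa using mul_nonneg (mul_nonneg (abs_nonneg _) (by linarith)) (by linarith)
  rcases eq_or_lt_of_le hab with rfl | h
  · simp
  · have hcont : ContinuousOn (fun t : ℝ => t ^ (p - 2)) (Set.Icc b a) := by
      intro x hx
      exact ((Real.hasDerivAt_rpow_const (p := p - 2)
        (Or.inl (by linarith [hx.1] : x ≠ 0))).continuousAt).continuousWithinAt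
    obtain ⟨c, hc, hceq⟩ := exists_hasDerivAt_eq_slope (fun t => t ^ (p - 2))
      (fun t => (p - 2) * t ^ (p - 2 - 1)) h hcont
      (fun x hx => Real.hasDerivAt_rpow_const (Or.inl (by linarith [hx.1] : x ≠ 0)))
    have hcb : b < c := hc.1
    have hca : c < a := hc.2
    have hc0 : 0 < c := lt_trans hb0 hcb
    have hab0 : (0:ℝ) < a - b := sub_pos.mpr h
    have key : a ^ (p - 2) - b ^ (p - 2) = (p - 2) * c ^ (p - 3) * (a - b) := by
      rw [show p - 2 - 1 = p - 3 by ring] at hceq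
      rw [hceq]; field_simp
    have habs : |a ^ (p - 2) - b ^ (p - 2)| = |p - 2| * c ^ (p - 3) * (a - b) := by
      rw [key, abs_mul, abs_mul, abs_of_pos hab0, abs_of_nonneg (Real.rpow_nonneg hc0.le _)]
    rw [habs]
    -- now bound c ^ (p-3) * (b*b) ≤ a^(p-1) + b^(p-1)
    have hmain : c ^ (p - 3) * (b * b) ≤ a ^ (p - 1) + b ^ (p - 1) := by
      rcases le_or_gt 3 p with h3 | h3
      · have h1 : c ^ (p - 3) ≤ a ^ (p - 3) := Real.rpow_le_rpow hc0.le hca.le (by linarith)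
        have h2 : c ^ (p - 3) * (b * b) ≤ a ^ (p - 3) * (a * a) :=
          mul_le_mul h1 (mul_le_mul hab hab hb (le_trans hb hab))
            (mul_nonneg hb hb) (Real.rpow_nonneg (le_trans hb hab) _)
        have h4 : a ^ (p - 3) * (a * a) = a ^ (p - 1) := by
          have ha0 : a ≠ 0 := ne_of_gt (lt_of_lt_of_le hb0 hab)
          rw [← mul_assoc, ← Real.rpow_add_one ha0, ← Real.rpow_add_one ha0]
          ring_nf
        linarith
      · have h1 : c ^ (p - 3) ≤ b ^ (p - 3) :=
          Real.rpow_le_rpow_of_nonpos hb0 hcb.le (by linarith)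
        have h2 : c ^ (p - 3) * (b * b) ≤ b ^ (p - 3) * (b * b) := by
          nlinarith
        have h4 : b ^ (p - 3) * (b * b) = b ^ (p - 1) := by
          have hb0' : b ≠ 0 := ne_of_gt hb0
          rw [← mul_assoc, ← Real.rpow_add_one hb0', ← Real.rpow_add_one hb0']
          ring_nf
        linarith
    calc |p - 2| * c ^ (p - 3) * (a - b) * (b * b)
        = |p - 2| * (c ^ (p - 3) * (b * b)) * (a - b) := by ring
      _ ≤ |p - 2| * (a ^ (p - 1) + b ^ (p - 1)) * (a - b) := by
          have := mul_le_mul_of_nonneg_left hmain (abs_nonneg (p - 2))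
          exact mul_le_mul_of_nonneg_right this hab0.le


noncomputable def Dop (p : ℝ) (z : ℂ) : ℂ →L[ℝ] ℂ :=
  (‖z‖ ^ p : ℝ) • ContinuousLinearMap.id ℝ ℂ +
    (p * ‖z‖ ^ (p - 2)) • ((innerSL ℝ z).smulRight z)

lemma Dop_zero (p : ℝ) (hp : 1 ≤ p) : Dop p 0 = 0 := by
  have hp0 : p ≠ 0 := by linarith
  ext h
  simp [Dop, Real.zero_rpow hp0]

lemma hasFDerivAt_Dop (p : ℝ) (hp : 1 ≤ p) (z : ℂ) :
    HasFDerivAt (fun y : ℂ => (‖y‖ ^ p : ℝ) • y) (Dop p z) z := by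
  rcases eq_or_ne z 0 with rfl | hz
  · -- derivative at zero is 0
    rw [Dop_zero p hp]
    rw [hasFDerivAt_iff_isLittleO_nhds_zero]
    have hp0 : p ≠ 0 := by linarith
    simp only [zero_add, norm_zero, Real.zero_rpow hp0, zero_smul, smul_zero, sub_zero,
      ContinuousLinearMap.zero_apply]
    rw [Asymptotics.isLittleO_iff]
    intro c hc
    have hmem : ∀ᶠ h : ℂ in nhds 0, ‖h‖ < min 1 c := by
      have := Metric.ball_mem_nhds (0:ℂ) (lt_min one_pos hc)
      filter_upwards [this] with h hh
      simpa [dist_zero_right] using hh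
    filter_upwards [hmem] with h hh
    rcases eq_or_ne h 0 with rfl | hh0
    · simp
    · have hn : 0 < ‖h‖ := norm_pos_iff.mpr hh0
      rw [norm_smul, Real.norm_eq_abs, abs_of_nonneg (Real.rpow_nonneg (norm_nonneg h) p)]
      have h1 : ‖h‖ ^ p ≤ ‖h‖ ^ (1:ℝ) :=
        Real.rpow_le_rpow_of_exponent_ge hn (le_of_lt (lt_of_lt_of_le hh (min_le_left _ _))) hp
      rw [Real.rpow_one] at h1
      have h2 : ‖h‖ ^ p ≤ c := le_trans h1 (le_of_lt (lt_of_lt_of_le hh (min_le_right _ _)))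
      calc ‖h‖ ^ p * ‖h‖ ≤ c * ‖h‖ := mul_le_mul_of_nonneg_right h2 (norm_nonneg h)
        _ = c * ‖id h‖ := rfl
  · -- z ≠ 0
    have hnz : ‖z‖ ≠ 0 := norm_ne_zero_iff.mpr hz
    have hnz2 : (‖z‖ ^ 2 : ℝ) ≠ 0 := pow_ne_zero 2 hnz
    have h1 : HasFDerivAt (fun y : ℂ => (‖y‖ ^ 2 : ℝ)) (2 • innerSL ℝ z) z :=
      (hasStrictFDerivAt_norm_sq z).hasFDerivAt
    have h2 : HasDerivAt (fun t : ℝ => t ^ (p / 2))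
        ((p / 2) * (‖z‖ ^ 2 : ℝ) ^ (p / 2 - 1)) (‖z‖ ^ 2 : ℝ) :=
      Real.hasDerivAt_rpow_const (Or.inl hnz2)
    have h3 := h2.comp_hasFDerivAt z h1
    have hfun : ((fun t : ℝ => t ^ (p / 2)) ∘ (fun y : ℂ => (‖y‖ ^ 2 : ℝ)))
        = fun y : ℂ => (‖y‖ ^ p : ℝ) := by
      funext y
      simp only [Function.comp_apply]
      rw [← Real.rpow_natCast ‖y‖ 2, ← Real.rpow_mul (norm_nonneg y)]
      congr 1
      push_cast
      ring
    have hder : ((p / 2) * (‖z‖ ^ 2 : ℝ) ^ (p / 2 - 1)) • (2 • innerSL ℝ z)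
        = (p * ‖z‖ ^ (p - 2)) • innerSL ℝ z := by
      have key : ((‖z‖ ^ 2 : ℝ)) ^ (p / 2 - 1) = ‖z‖ ^ (p - 2) := by
        rw [← Real.rpow_natCast ‖z‖ 2, ← Real.rpow_mul (norm_nonneg z)]
        congr 1
        push_cast
        ring
      ext h
      simp only [ContinuousLinearMap.smul_apply, smul_eq_mul, key]
      ring
    rw [hfun, hder] at h3
    have h4 := h3.smul (hasFDerivAt_id z)
    have heq : Dop p z = (‖z‖ ^ p : ℝ) • ContinuousLinearMap.id ℝ ℂ +
        ((p * ‖z‖ ^ (p - 2)) • innerSL ℝ z).smulRight z := by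
      unfold Dop
      congr 1
      ext h
      simp only [ContinuousLinearMap.smul_apply, ContinuousLinearMap.smulRight_apply,
        smul_eq_mul, smul_smul]
    rw [heq]
    exact h4

set_option synthInstance.maxHeartbeats 1000000 in
set_option maxHeartbeats 1000000 in
lemma Dop_est {p : ℝ} (hp : 1 ≤ p) {z w : ℂ} (hzw : ‖w‖ ≤ ‖z‖) :
    ‖Dop p z - Dop p w‖ ≤
      (p * (|p - 2| + 3)) * (‖z‖ ^ (p - 1) + ‖w‖ ^ (p - 1)) * ‖z - w‖ := by
  have hp0 : (0:ℝ) < p := by linarith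
  rcases eq_or_ne z 0 with rfl | hz
  · have hw : w = 0 := by
      have := le_antisymm (le_trans hzw (by simp)) (norm_nonneg w)
      exact norm_eq_zero.mp this
    subst hw
    simp
  · have ha0 : (0:ℝ) < ‖z‖ := norm_pos_iff.mpr hz
    have hb0 : (0:ℝ) ≤ ‖w‖ := norm_nonneg w
    have hd0 : (0:ℝ) ≤ ‖z - w‖ := norm_nonneg _
    have habd : ‖z‖ - ‖w‖ ≤ ‖z - w‖ := norm_sub_norm_le z w
    have ha1 : (0:ℝ) ≤ ‖z‖ ^ (p - 1) := Real.rpow_nonneg ha0.le _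
    have hb1 : (0:ℝ) ≤ ‖w‖ ^ (p - 1) := Real.rpow_nonneg hb0 _
    set Bz := (innerSL ℝ z).smulRight z with hBz
    set Bw := (innerSL ℝ w).smulRight w with hBw
    have hsplit : Dop p z - Dop p w =
        (‖z‖ ^ p - ‖w‖ ^ p) • ContinuousLinearMap.id ℝ ℂ +
        (p * (‖z‖ ^ (p - 2) - ‖w‖ ^ (p - 2))) • Bw +
        (p * ‖z‖ ^ (p - 2)) • (Bz - Bw) := by
      unfold Dop
      rw [← hBz, ← hBw]
      module
    have hBwnorm : ‖Bw‖ = ‖w‖ * ‖w‖ := by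
      rw [hBw, ContinuousLinearMap.norm_smulRight_apply, innerSL_apply_norm]
    have hBdiff : Bz - Bw = (innerSL ℝ (z - w)).smulRight z + (innerSL ℝ w).smulRight (z - w) := by
      rw [hBz, hBw]
      ext h
      simp only [ContinuousLinearMap.add_apply, ContinuousLinearMap.sub_apply,
        ContinuousLinearMap.smulRight_apply, map_sub, ContinuousLinearMap.sub_apply,
        sub_smul, smul_sub]
      abel
    have hBdn : ‖Bz - Bw‖ ≤ 2 * ‖z‖ * ‖z - w‖ := by
      rw [hBdiff]
      refine le_trans (norm_add_le _ _) ?_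
      rw [ContinuousLinearMap.norm_smulRight_apply, innerSL_apply_norm,
        ContinuousLinearMap.norm_smulRight_apply, innerSL_apply_norm]
      nlinarith
    have hrpow_le : ‖w‖ ^ p ≤ ‖z‖ ^ p := Real.rpow_le_rpow hb0 hzw hp0.le
    have n1 : ‖(‖z‖ ^ p - ‖w‖ ^ p) • ContinuousLinearMap.id ℝ ℂ‖ ≤
        p * ‖z‖ ^ (p - 1) * ‖z - w‖ := by
      rw [norm_smul (‖z‖ ^ p - ‖w‖ ^ p) (ContinuousLinearMap.id ℝ ℂ), Real.norm_eq_abs, abs_of_nonneg (by linarith)]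
      have hid : ‖ContinuousLinearMap.id ℝ ℂ‖ ≤ 1 := ContinuousLinearMap.norm_id_le
      have h1 := aux_mvt1 hp hb0 hzw
      have h2 : p * ‖z‖ ^ (p - 1) * (‖z‖ - ‖w‖) ≤ p * ‖z‖ ^ (p - 1) * ‖z - w‖ :=
        mul_le_mul_of_nonneg_left habd (by positivity)
      nlinarith [mul_le_mul_of_nonneg_left hid (by linarith : (0:ℝ) ≤ ‖z‖ ^ p - ‖w‖ ^ p)]
    have n2 : ‖(p * (‖z‖ ^ (p - 2) - ‖w‖ ^ (p - 2))) • Bw‖ ≤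
        p * (|p - 2| * (‖z‖ ^ (p - 1) + ‖w‖ ^ (p - 1)) * ‖z - w‖) := by
      rw [norm_smul (p * (‖z‖ ^ (p - 2) - ‖w‖ ^ (p - 2))) Bw, Real.norm_eq_abs, abs_mul, abs_of_pos hp0, hBwnorm, mul_assoc]
      have h1 : |‖z‖ ^ (p - 2) - ‖w‖ ^ (p - 2)| * (‖w‖ * ‖w‖) ≤
          |p - 2| * (‖z‖ ^ (p - 1) + ‖w‖ ^ (p - 1)) * (‖z‖ - ‖w‖) := aux_mvt2 hp hb0 hzw
      have h2 : |p - 2| * (‖z‖ ^ (p - 1) + ‖w‖ ^ (p - 1)) * (‖z‖ - ‖w‖) ≤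
          |p - 2| * (‖z‖ ^ (p - 1) + ‖w‖ ^ (p - 1)) * ‖z - w‖ :=
        mul_le_mul_of_nonneg_left habd (by positivity)
      exact mul_le_mul_of_nonneg_left (le_trans h1 h2) hp0.le
    have n3 : ‖(p * ‖z‖ ^ (p - 2)) • (Bz - Bw)‖ ≤ 2 * p * ‖z‖ ^ (p - 1) * ‖z - w‖ := by
      rw [norm_smul (p * ‖z‖ ^ (p - 2)) (Bz - Bw), Real.norm_eq_abs, abs_mul, abs_of_pos hp0,
        abs_of_nonneg (Real.rpow_nonneg ha0.le _)]
      have h1 : p * ‖z‖ ^ (p - 2) * ‖Bz - Bw‖ ≤ p * ‖z‖ ^ (p - 2) * (2 * ‖z‖ * ‖z - w‖) :=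
        mul_le_mul_of_nonneg_left hBdn (by positivity)
      have h2 : ‖z‖ ^ (p - 2) * ‖z‖ = ‖z‖ ^ (p - 1) := by
        rw [← Real.rpow_add_one (ne_of_gt ha0)]
        ring_nf
      calc p * ‖z‖ ^ (p - 2) * ‖Bz - Bw‖ ≤ p * ‖z‖ ^ (p - 2) * (2 * ‖z‖ * ‖z - w‖) := h1
        _ = 2 * p * (‖z‖ ^ (p - 2) * ‖z‖) * ‖z - w‖ := by ring
        _ = 2 * p * ‖z‖ ^ (p - 1) * ‖z - w‖ := by rw [h2]
    calc ‖Dop p z - Dop p w‖ ≤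
        ‖(‖z‖ ^ p - ‖w‖ ^ p) • ContinuousLinearMap.id ℝ ℂ +
          (p * (‖z‖ ^ (p - 2) - ‖w‖ ^ (p - 2))) • Bw‖ +
          ‖(p * ‖z‖ ^ (p - 2)) • (Bz - Bw)‖ := by rw [hsplit]; exact norm_add_le _ _
      _ ≤ ‖(‖z‖ ^ p - ‖w‖ ^ p) • ContinuousLinearMap.id ℝ ℂ‖ +
          ‖(p * (‖z‖ ^ (p - 2) - ‖w‖ ^ (p - 2))) • Bw‖ +
          ‖(p * ‖z‖ ^ (p - 2)) • (Bz - Bw)‖ := by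
            have := norm_add_le ((‖z‖ ^ p - ‖w‖ ^ p) • ContinuousLinearMap.id ℝ ℂ)
              ((p * (‖z‖ ^ (p - 2) - ‖w‖ ^ (p - 2))) • Bw)
            linarith
      _ ≤ p * (|p - 2| + 3) * (‖z‖ ^ (p - 1) + ‖w‖ ^ (p - 1)) * ‖z - w‖ := by
            have habs : (0:ℝ) ≤ |p - 2| := abs_nonneg _
            nlinarith [n1, n2, n3,
              mul_nonneg (mul_nonneg hp0.le hd0) hb1,
              mul_nonneg (mul_nonneg (mul_nonneg habs hp0.le) hd0) hb1]

/-- For `p ≥ 1`, the map `G(z) = |z|^p z` on `ℂ` is real-Fréchet differentiable and its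
derivative satisfies `‖DG(z) - DG(w)‖ ≤ C (|z|^{p-1} + |w|^{p-1}) |z - w|`. -/
theorem stmt1 (p : ℝ) (hp : 1 ≤ p) (G : ℂ → ℂ) (hG : ∀ z, G z = (‖z‖ ^ p : ℝ) • z) :
    Differentiable ℝ G ∧
      ∃ C : ℝ, 0 < C ∧ ∀ z w : ℂ,
        ‖fderiv ℝ G z - fderiv ℝ G w‖ ≤ C * (‖z‖ ^ (p - 1) + ‖w‖ ^ (p - 1)) * ‖z - w‖ := by
  have hGfun : G = fun z : ℂ => (‖z‖ ^ p : ℝ) • z := funext hG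
  have hD : ∀ z : ℂ, HasFDerivAt G (Dop p z) z := by
    rw [hGfun]; exact hasFDerivAt_Dop p hp
  refine ⟨fun z => (hD z).differentiableAt, p * (|p - 2| + 3), ?_, ?_⟩
  · have h1 : (0:ℝ) < |p - 2| + 3 := by positivity
    exact mul_pos (by linarith) h1
  · intro z w
    rw [(hD z).fderiv, (hD w).fderiv]
    rcases le_total ‖w‖ ‖z‖ with h | h
    · exact Dop_est hp h
    · have hkey := Dop_est hp (z := w) (w := z) h
      rw [norm_sub_rev (Dop p w), norm_sub_rev w z, add_comm (‖w‖ ^ (p - 1))] at hkey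
      exact hkey
end

section
/- Let N ≥ 1, b > 0 and p ≥ 1. There exists C > 0 with the following property: if u, v : ℝ^N → ℂ are differentiable at a point x ≠ 0, then the map y ↦ |y|^{−b}(G(u(y)) − G(v(y))), where G(z) = |z|^p z, is differentiable at x and its gradient satisfies |∇(|·|^{−b}(G∘u − G∘v))(x)| ≤ C [ |x|^{−b−1}(|u(x)|^p + |v(x)|^p)|u(x) − v(x)| + |x|^{−b}|u(x)|^p |∇(u − v)(x)| + |x|^{−b}(|u(x)|^{p−1} + |v(x)|^{p−1}) |∇v(x)| |u(x) − v(x)| ]. -/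
/-!
Write `G z = ‖z‖ ^ p • z`. Its derivative is `G' z = ‖z‖ ^ p • (id + p • ẑ ⊗ ẑ)` with the unit
vector `ẑ = ‖z‖⁻¹ • z`, so `‖G' z‖ ≤ (1 + p) ‖z‖ ^ p`. The mean value inequality for `t ↦ t ^ p`
(`p ≥ 1`) controls the radial parts `‖z‖ ^ p - ‖w‖ ^ p`, and `‖ẑ - ŵ‖ ≤ 2 ‖z - w‖ / ‖z‖` the
angular part, giving `‖G z - G w‖ ≲ (‖z‖ ^ p + ‖w‖ ^ p) ‖z - w‖` and
`‖G' z - G' w‖ ≲ (‖z‖ ^ (p - 1) + ‖w‖ ^ (p - 1)) ‖z - w‖`. By the product and chain rules the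
derivative of `|x| ^ (-b) (G ∘ u - G ∘ v)` at `x ≠ 0` is
`∇|x| ^ (-b) ⊗ (G u - G v) + |x| ^ (-b) (G' u ∘ D(u - v) + (G' u - G' v) ∘ Dv)`, and
`‖∇|x| ^ (-b)‖ ≤ |b| |x| ^ (-b - 1)`; the three estimates bound the three terms.
-/

open Real Asymptotics Topology InnerProductSpace

theorem Real.rpow_sub_rpow_le_mul_sub {a c p : ℝ} (ha : 0 ≤ a) (hac : a ≤ c) (hp : 1 ≤ p) :
    c ^ p - a ^ p ≤ p * c ^ (p - 1) * (c - a) := by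
  have hderiv : ∀ t : ℝ, HasDerivAt (fun t : ℝ => t ^ p) (p * t ^ (p - 1)) t :=
    fun t => hasDerivAt_rpow_const (Or.inr hp)
  refine (convex_Icc 0 c).image_sub_le_mul_sub_of_deriv_le
    (fun t _ => (hderiv t).continuousAt.continuousWithinAt)
    (fun t _ => (hderiv t).differentiableAt.differentiableWithinAt) ?_ a ⟨ha, hac⟩ c
    ⟨ha.trans hac, le_rfl⟩ hac
  intro t ht
  rw [interior_Icc] at ht
  obtain ⟨ht0, htc⟩ := ht
  rw [(hderiv t).deriv]
  gcongr

theorem mul_add_mul_add_mul_le {a b c A B D : ℝ} (ha : 0 ≤ a) (hb : 0 ≤ b) (hc : 0 ≤ c)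
    (hA : 0 ≤ A) (hB : 0 ≤ B) (hD : 0 ≤ D) :
    a * A + b * B + c * D ≤ (a + b + c) * (A + B + D) := by
  nlinarith [mul_nonneg ha hB, mul_nonneg ha hD, mul_nonneg hb hA, mul_nonneg hb hD,
    mul_nonneg hc hA, mul_nonneg hc hB]

section

variable {E : Type*} [NormedAddCommGroup E]

theorem abs_norm_rpow_sub_norm_rpow_le {z w : E} {p : ℝ} (hp : 1 ≤ p) (h : ‖w‖ ≤ ‖z‖) :
    |‖z‖ ^ p - ‖w‖ ^ p| ≤ p * ‖z‖ ^ (p - 1) * ‖z - w‖ := by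
  have hmono : ‖w‖ ^ p ≤ ‖z‖ ^ p := rpow_le_rpow (norm_nonneg w) h (by linarith)
  rw [abs_of_nonneg (sub_nonneg.2 hmono)]
  calc ‖z‖ ^ p - ‖w‖ ^ p ≤ p * ‖z‖ ^ (p - 1) * (‖z‖ - ‖w‖) :=
        rpow_sub_rpow_le_mul_sub (norm_nonneg w) h hp
    _ ≤ p * ‖z‖ ^ (p - 1) * ‖z - w‖ := by gcongr; exact norm_sub_norm_le z w

variable [NormedSpace ℝ E]

theorem norm_inv_norm_smul_le (z : E) : ‖‖z‖⁻¹ • z‖ ≤ 1 := by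
  rcases eq_or_ne z 0 with rfl | hz
  · simp
  · rw [norm_smul, norm_inv, norm_norm, inv_mul_cancel₀ (norm_ne_zero_iff.2 hz)]

theorem norm_inv_norm_smul_sub_le {z : E} (hz : z ≠ 0) (w : E) :
    ‖‖z‖⁻¹ • z - ‖w‖⁻¹ • w‖ ≤ 2 * ‖z - w‖ / ‖z‖ := by
  have hz' : 0 < ‖z‖ := norm_pos_iff.2 hz
  have hsplit : ‖z‖⁻¹ • z - ‖w‖⁻¹ • w = ‖z‖⁻¹ • (z - w) + (‖z‖⁻¹ - ‖w‖⁻¹) • w := by module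
  have hradial : ‖(‖z‖⁻¹ - ‖w‖⁻¹) • w‖ ≤ ‖z - w‖ / ‖z‖ := by
    rcases eq_or_ne w 0 with rfl | hw
    · rw [smul_zero, norm_zero]; positivity
    have hw' : 0 < ‖w‖ := norm_pos_iff.2 hw
    rw [norm_smul, norm_eq_abs, show (‖z‖⁻¹ - ‖w‖⁻¹) = (‖w‖ - ‖z‖) / (‖z‖ * ‖w‖) by field_simp,
      abs_div, abs_of_pos (mul_pos hz' hw'), div_mul_eq_mul_div, mul_div_mul_right _ _ hw'.ne']
    gcongr
    rw [norm_sub_rev]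
    exact abs_norm_sub_norm_le w z
  calc ‖‖z‖⁻¹ • z - ‖w‖⁻¹ • w‖ ≤ ‖‖z‖⁻¹ • (z - w)‖ + ‖(‖z‖⁻¹ - ‖w‖⁻¹) • w‖ :=
        hsplit ▸ norm_add_le _ _
    _ ≤ ‖z - w‖ / ‖z‖ + ‖z - w‖ / ‖z‖ := by
        gcongr
        rw [norm_smul, norm_inv, norm_norm, inv_mul_eq_div]
    _ = 2 * ‖z - w‖ / ‖z‖ := by ring

end

section

variable {E : Type*} [NormedAddCommGroup E] [InnerProductSpace ℝ E]

theorem norm_rankOne_self_sub_rankOne_self_le {e f : E} (he : ‖e‖ ≤ 1) (hf : ‖f‖ ≤ 1) :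
    ‖rankOne ℝ e e - rankOne ℝ f f‖ ≤ 2 * ‖e - f‖ := by
  have hsplit : rankOne ℝ e e - rankOne ℝ f f = rankOne ℝ e (e - f) + rankOne ℝ (e - f) f := by
    simp only [map_sub, sub_apply]
    abel
  rw [hsplit]
  calc _ ≤ ‖e‖ * ‖e - f‖ + ‖e - f‖ * ‖f‖ := by
        simpa only [norm_rankOne] using norm_add_le (rankOne ℝ e (e - f)) (rankOne ℝ (e - f) f)
    _ ≤ 1 * ‖e - f‖ + ‖e - f‖ * 1 := by gcongr
    _ = 2 * ‖e - f‖ := by ring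

theorem norm_id_add_smul_rankOne_self_le {p : ℝ} (hp : 0 ≤ p) {e : E} (he : ‖e‖ ≤ 1) :
    ‖ContinuousLinearMap.id ℝ E + p • rankOne ℝ e e‖ ≤ 1 + p := by
  calc _ ≤ ‖ContinuousLinearMap.id ℝ E‖ + ‖p • rankOne ℝ e e‖ := norm_add_le _ _
    _ ≤ 1 + p * (1 * 1) := by
        rw [norm_smul, norm_rankOne, norm_eq_abs, abs_of_nonneg hp]
        gcongr
        exact ContinuousLinearMap.norm_id_le
    _ = 1 + p := by ring

theorem differentiableAt_norm_rpow_of_ne_zero {x : E} (hx : x ≠ 0) (q : ℝ) :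
    DifferentiableAt ℝ (fun y : E => ‖y‖ ^ q) x :=
  (differentiableAt_id.norm ℝ hx).rpow_const (Or.inl (norm_ne_zero_iff.2 hx))

theorem norm_fderiv_norm_rpow_le_of_ne_zero {x : E} (hx : x ≠ 0) (q : ℝ) :
    ‖fderiv ℝ (fun y : E => ‖y‖ ^ q) x‖ ≤ |q| * ‖x‖ ^ (q - 1) := by
  have hnorm : DifferentiableAt ℝ (‖·‖) x := differentiableAt_id.norm ℝ hx
  rw [(hnorm.hasFDerivAt.rpow_const (Or.inl (norm_ne_zero_iff.2 hx))).fderiv, norm_smul,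
    norm_mul, norm_eq_abs, norm_eq_abs, abs_of_nonneg (rpow_nonneg (norm_nonneg x) _)]
  calc _ ≤ |q| * ‖x‖ ^ (q - 1) * 1 := by
        gcongr
        exact norm_fderiv_le_of_lipschitz ℝ (f := fun y : E => ‖y‖) lipschitzWith_one_norm
    _ = _ := mul_one _

noncomputable def powNonlin (p : ℝ) (z : E) : E := ‖z‖ ^ p • z

/-- Written with the unit vector `‖z‖⁻¹ • z` so that it is also the derivative at `z = 0`,
where it vanishes. -/
noncomputable def powNonlinDeriv (p : ℝ) (z : E) : E →L[ℝ] E :=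
  ‖z‖ ^ p • (ContinuousLinearMap.id ℝ E + p • rankOne ℝ (‖z‖⁻¹ • z) (‖z‖⁻¹ • z))

theorem hasFDerivAt_powNonlin {p : ℝ} (hp : 1 ≤ p) (z : E) :
    HasFDerivAt (powNonlin p) (powNonlinDeriv p z) z := by
  have hp0 : p ≠ 0 := (zero_lt_one.trans_le hp).ne'
  rcases eq_or_ne z 0 with rfl | hz
  · have hzero : powNonlinDeriv p (0 : E) = 0 := by simp [powNonlinDeriv, zero_rpow hp0]
    rw [hzero]
    refine .of_isLittleO ?_
    have hsmall : (fun h : E => ‖h‖ ^ p) =o[𝓝 0] (fun _ => (1 : ℝ)) := by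
      have := (continuous_norm.rpow_const (fun _ => Or.inr (zero_le_one.trans hp))).tendsto (0 : E)
      rw [norm_zero, zero_rpow hp0] at this
      exact (isLittleO_one_iff ℝ).2 this
    simpa [powNonlin] using hsmall.smul_isBigO (isBigO_refl (fun h : E => h) (𝓝 0))
  · have hz' : 0 < ‖z‖ := norm_pos_iff.2 hz
    have h := ((hasStrictFDerivAt_norm_sq z).hasFDerivAt.rpow_const (p := p / 2)
      (Or.inl (by positivity))).smul (hasFDerivAt_id z)
    have hfun : (fun y : E => (‖y‖ ^ 2) ^ (p / 2)) • (id : E → E) = powNonlin p := by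
      ext y
      rw [Pi.smul_apply', id, ← rpow_natCast_mul (norm_nonneg y), Nat.cast_ofNat,
        mul_div_cancel₀ p two_ne_zero, powNonlin]
    rw [hfun] at h
    refine h.congr_fderiv ?_
    have hpow : (‖z‖ ^ 2) ^ (p / 2 - 1) = ‖z‖ ^ p * (‖z‖⁻¹ * ‖z‖⁻¹) := by
      rw [← rpow_natCast_mul (norm_nonneg z), ← rpow_neg_one, ← rpow_add hz', ← rpow_add hz']
      congr 1
      push_cast
      ring
    have hsq : (‖z‖ ^ 2) ^ (p / 2) = ‖z‖ ^ p := by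
      rw [← rpow_natCast_mul (norm_nonneg z), Nat.cast_ofNat, mul_div_cancel₀ p two_ne_zero]
    ext y
    simp only [powNonlinDeriv, hsq, hpow, rankOne_def, id_eq, add_apply, smul_apply,
      ContinuousLinearMap.id_apply, ContinuousLinearMap.smulRight_apply, coe_innerSL_apply,
      nsmul_eq_mul, Nat.cast_ofNat, smul_eq_mul, map_smul, smul_smul, smul_add]
    module

theorem norm_powNonlinDeriv_le {p : ℝ} (hp : 0 ≤ p) (z : E) :
    ‖powNonlinDeriv p z‖ ≤ (1 + p) * ‖z‖ ^ p := by
  rw [powNonlinDeriv, norm_smul, norm_eq_abs, abs_of_nonneg (by positivity), mul_comm]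
  gcongr
  exact norm_id_add_smul_rankOne_self_le hp (norm_inv_norm_smul_le z)

theorem norm_powNonlin_sub_le {p : ℝ} (hp : 1 ≤ p) (z w : E) :
    ‖powNonlin p z - powNonlin p w‖ ≤ (1 + p) * (‖z‖ ^ p + ‖w‖ ^ p) * ‖z - w‖ := by
  wlog hwz : ‖w‖ ≤ ‖z‖ generalizing z w
  · rw [norm_sub_rev, norm_sub_rev z, add_comm (‖z‖ ^ p)]
    exact this w z (le_of_not_ge hwz)
  have hsplit : powNonlin p z - powNonlin p w = ‖z‖ ^ p • (z - w) + (‖z‖ ^ p - ‖w‖ ^ p) • w := by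
    simp only [powNonlin]; module
  have hradial : ‖z‖ ^ (p - 1) * ‖w‖ ≤ ‖z‖ ^ p := by
    calc ‖z‖ ^ (p - 1) * ‖w‖ ≤ ‖z‖ ^ (p - 1) * ‖z‖ := by gcongr
      _ = ‖z‖ ^ p := by rw [← rpow_add_one' (norm_nonneg z) (by linarith), sub_add_cancel]
  calc ‖powNonlin p z - powNonlin p w‖
      ≤ ‖z‖ ^ p * ‖z - w‖ + p * ‖z‖ ^ (p - 1) * ‖z - w‖ * ‖w‖ := by
        rw [hsplit]
        refine (norm_add_le _ _).trans ?_
        rw [norm_smul, norm_smul, norm_eq_abs, norm_eq_abs, abs_of_nonneg (by positivity)]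
        gcongr
        exact abs_norm_rpow_sub_norm_rpow_le hp hwz
    _ ≤ ‖z‖ ^ p * ‖z - w‖ + p * ‖z‖ ^ p * ‖z - w‖ := by
        have := mul_le_mul_of_nonneg_left hradial (by positivity : 0 ≤ p * ‖z - w‖)
        linarith
    _ ≤ (1 + p) * (‖z‖ ^ p + ‖w‖ ^ p) * ‖z - w‖ := by
        have : 0 ≤ (1 + p) * ‖w‖ ^ p * ‖z - w‖ := by positivity
        linarith

theorem norm_powNonlinDeriv_sub_le {p : ℝ} (hp : 1 ≤ p) (z w : E) :
    ‖powNonlinDeriv p z - powNonlinDeriv p w‖ ≤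
      p * (p + 5) * (‖z‖ ^ (p - 1) + ‖w‖ ^ (p - 1)) * ‖z - w‖ := by
  wlog hwz : ‖w‖ ≤ ‖z‖ generalizing z w
  · rw [norm_sub_rev, norm_sub_rev z, add_comm (‖z‖ ^ (p - 1))]
    exact this w z (le_of_not_ge hwz)
  rcases eq_or_ne z 0 with rfl | hz
  · obtain rfl : w = 0 := norm_le_zero_iff.1 (by simpa using hwz)
    simp
  have hz' : 0 < ‖z‖ := norm_pos_iff.2 hz
  set ez := ‖z‖⁻¹ • z
  set ew := ‖w‖⁻¹ • w
  have hsplit : powNonlinDeriv p z - powNonlinDeriv p w =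
      (‖z‖ ^ p - ‖w‖ ^ p) • (ContinuousLinearMap.id ℝ E + p • rankOne ℝ ez ez)
        + (p * ‖w‖ ^ p) • (rankOne ℝ ez ez - rankOne ℝ ew ew) := by
    simp only [powNonlinDeriv]; module
  have hradial : ‖(‖z‖ ^ p - ‖w‖ ^ p) • (ContinuousLinearMap.id ℝ E + p • rankOne ℝ ez ez)‖ ≤
      (1 + p) * p * ‖z‖ ^ (p - 1) * ‖z - w‖ := by
    rw [norm_smul, norm_eq_abs, mul_comm, mul_assoc (1 + p), mul_assoc (1 + p)]
    gcongr
    · exact norm_id_add_smul_rankOne_self_le (by linarith) (norm_inv_norm_smul_le z)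
    · exact abs_norm_rpow_sub_norm_rpow_le hp hwz
  have hangular : ‖(p * ‖w‖ ^ p) • (rankOne ℝ ez ez - rankOne ℝ ew ew)‖ ≤
      4 * p * ‖z‖ ^ (p - 1) * ‖z - w‖ := by
    calc _ = p * ‖w‖ ^ p * ‖rankOne ℝ ez ez - rankOne ℝ ew ew‖ := by
          rw [norm_smul, norm_eq_abs, abs_of_nonneg (by positivity)]
      _ ≤ p * ‖z‖ ^ p * (2 * (2 * ‖z - w‖ / ‖z‖)) := by
          gcongr
          refine (norm_rankOne_self_sub_rankOne_self_le (norm_inv_norm_smul_le z)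
            (norm_inv_norm_smul_le w)).trans ?_
          gcongr
          exact norm_inv_norm_smul_sub_le hz w
      _ = 4 * p * ‖z‖ ^ (p - 1) * ‖z - w‖ := by
          rw [rpow_sub_one hz'.ne']
          ring
  calc _ ≤ (1 + p) * p * ‖z‖ ^ (p - 1) * ‖z - w‖ + 4 * p * ‖z‖ ^ (p - 1) * ‖z - w‖ :=
        hsplit ▸ (norm_add_le _ _).trans (add_le_add hradial hangular)
    _ = p * (p + 5) * ‖z‖ ^ (p - 1) * ‖z - w‖ := by ring
    _ ≤ p * (p + 5) * (‖z‖ ^ (p - 1) + ‖w‖ ^ (p - 1)) * ‖z - w‖ := by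
        gcongr
        exact le_add_of_nonneg_right (by positivity)

end

section

variable {E F : Type*} [NormedAddCommGroup E] [InnerProductSpace ℝ E]
  [NormedAddCommGroup F] [NormedSpace ℝ F]

theorem HasFDerivAt.powNonlin_sub_powNonlin {p : ℝ} (hp : 1 ≤ p) {u v : F → E}
    {u' v' : F →L[ℝ] E} {x : F} (hu : HasFDerivAt u u' x) (hv : HasFDerivAt v v' x) :
    HasFDerivAt (fun y => powNonlin p (u y) - powNonlin p (v y))
      ((powNonlinDeriv p (u x)).comp u' - (powNonlinDeriv p (v x)).comp v') x :=
  ((hasFDerivAt_powNonlin hp (u x)).comp x hu).sub ((hasFDerivAt_powNonlin hp (v x)).comp x hv)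

theorem norm_powNonlinDeriv_comp_sub_le {p : ℝ} (hp : 1 ≤ p) (z w : E) (u' v' : F →L[ℝ] E) :
    ‖(powNonlinDeriv p z).comp u' - (powNonlinDeriv p w).comp v'‖ ≤
      (1 + p) * ‖z‖ ^ p * ‖u' - v'‖
        + p * (p + 5) * (‖z‖ ^ (p - 1) + ‖w‖ ^ (p - 1)) * ‖z - w‖ * ‖v'‖ := by
  have hsplit : (powNonlinDeriv p z).comp u' - (powNonlinDeriv p w).comp v' =
      (powNonlinDeriv p z).comp (u' - v') + (powNonlinDeriv p z - powNonlinDeriv p w).comp v' := by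
    rw [ContinuousLinearMap.comp_sub, ContinuousLinearMap.sub_comp]
    abel
  rw [hsplit]
  refine (norm_add_le _ _).trans (add_le_add ?_ ?_)
  · refine (ContinuousLinearMap.opNorm_comp_le _ _).trans ?_
    gcongr
    exact norm_powNonlinDeriv_le (by linarith) z
  · refine (ContinuousLinearMap.opNorm_comp_le _ _).trans ?_
    gcongr
    exact norm_powNonlinDeriv_sub_le hp z w

end

theorem stmt2_general (N : ℕ) (b p : ℝ) (hp : 1 ≤ p) :
    ∃ C : ℝ, 0 < C ∧
      ∀ (u v : EuclideanSpace ℝ (Fin N) → ℂ) (x : EuclideanSpace ℝ (Fin N)), x ≠ 0 →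
        DifferentiableAt ℝ u x → DifferentiableAt ℝ v x →
        DifferentiableAt ℝ
            (fun y => (‖y‖ ^ (-b) : ℝ) • ((‖u y‖ ^ p : ℝ) • u y - (‖v y‖ ^ p : ℝ) • v y)) x ∧
          ‖fderiv ℝ
              (fun y => (‖y‖ ^ (-b) : ℝ) • ((‖u y‖ ^ p : ℝ) • u y - (‖v y‖ ^ p : ℝ) • v y)) x‖ ≤
            C * (‖x‖ ^ (-b - 1) * (‖u x‖ ^ p + ‖v x‖ ^ p) * ‖u x - v x‖
              + ‖x‖ ^ (-b) * ‖u x‖ ^ p * ‖fderiv ℝ (fun y => u y - v y) x‖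
              + ‖x‖ ^ (-b) * (‖u x‖ ^ (p - 1) + ‖v x‖ ^ (p - 1)) * ‖fderiv ℝ v x‖
                  * ‖u x - v x‖) := by
  set C := |b| * (1 + p) + (1 + p) + p * (p + 5)
  refine ⟨C, by positivity, fun u v x hx hu hv => ?_⟩
  have hweight := (differentiableAt_norm_rpow_of_ne_zero hx (-b)).hasFDerivAt
  have hF : HasFDerivAt (fun y => ‖y‖ ^ (-b) • (‖u y‖ ^ p • u y - ‖v y‖ ^ p • v y)) _ x :=
    hweight.smul (HasFDerivAt.powNonlin_sub_powNonlin hp hu.hasFDerivAt hv.hasFDerivAt)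
  refine ⟨hF.differentiableAt, ?_⟩
  rw [hF.fderiv, fderiv_fun_sub hu hv]
  calc _ ≤ ‖x‖ ^ (-b) * ((1 + p) * ‖u x‖ ^ p * ‖fderiv ℝ u x - fderiv ℝ v x‖
            + p * (p + 5) * (‖u x‖ ^ (p - 1) + ‖v x‖ ^ (p - 1)) * ‖u x - v x‖ * ‖fderiv ℝ v x‖)
          + |b| * ‖x‖ ^ (-b - 1) * ((1 + p) * (‖u x‖ ^ p + ‖v x‖ ^ p) * ‖u x - v x‖) := by
        refine (norm_add_le _ _).trans (add_le_add ?_ ?_)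
        · rw [norm_smul, norm_eq_abs, abs_of_nonneg (by positivity)]
          gcongr
          exact norm_powNonlinDeriv_comp_sub_le hp _ _ _ _
        · rw [ContinuousLinearMap.norm_smulRight_apply, ← abs_neg b]
          exact mul_le_mul (norm_fderiv_norm_rpow_le_of_ne_zero hx (-b))
            (norm_powNonlin_sub_le hp _ _) (norm_nonneg _) (by positivity)
    _ = |b| * (1 + p) * (‖x‖ ^ (-b - 1) * (‖u x‖ ^ p + ‖v x‖ ^ p) * ‖u x - v x‖)
          + (1 + p) * (‖x‖ ^ (-b) * ‖u x‖ ^ p * ‖fderiv ℝ u x - fderiv ℝ v x‖)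
          + p * (p + 5) * (‖x‖ ^ (-b) * (‖u x‖ ^ (p - 1) + ‖v x‖ ^ (p - 1)) * ‖fderiv ℝ v x‖
              * ‖u x - v x‖) := by ring
    _ ≤ _ := mul_add_mul_add_mul_le (by positivity) (by positivity) (by positivity)
        (by positivity) (by positivity) (by positivity)

/-- Second-derivative-type estimate for the inhomogeneous nonlinearity, case `p ≥ 1`:
if `u, v` are differentiable at `x ≠ 0` then `y ↦ |y|^{-b}(G(u(y)) - G(v(y)))`, with
`G(z) = |z|^p z`, is differentiable at `x`, and its gradient obeys the stated bound. -/
theorem stmt2 (N : ℕ) (hN : 1 ≤ N) (b p : ℝ) (hb : 0 < b) (hp : 1 ≤ p) :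
    ∃ C : ℝ, 0 < C ∧
      ∀ (u v : EuclideanSpace ℝ (Fin N) → ℂ) (x : EuclideanSpace ℝ (Fin N)), x ≠ 0 →
        DifferentiableAt ℝ u x → DifferentiableAt ℝ v x →
        DifferentiableAt ℝ
            (fun y => (‖y‖ ^ (-b) : ℝ) • ((‖u y‖ ^ p : ℝ) • u y - (‖v y‖ ^ p : ℝ) • v y)) x ∧
          ‖fderiv ℝ
              (fun y => (‖y‖ ^ (-b) : ℝ) • ((‖u y‖ ^ p : ℝ) • u y - (‖v y‖ ^ p : ℝ) • v y)) x‖ ≤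
            C * (‖x‖ ^ (-b - 1) * (‖u x‖ ^ p + ‖v x‖ ^ p) * ‖u x - v x‖
              + ‖x‖ ^ (-b) * ‖u x‖ ^ p * ‖fderiv ℝ (fun y => u y - v y) x‖
              + ‖x‖ ^ (-b) * (‖u x‖ ^ (p - 1) + ‖v x‖ ^ (p - 1)) * ‖fderiv ℝ v x‖
                  * ‖u x - v x‖) :=
  stmt2_general N b p hp
end

section
/- (Rellich inequality) Let N ≥ 5. There exists a constant C = C(N) > 0 such that for every smooth compactly supported function u : ℝ^N → ℂ one has ∫_{ℝ^N} |x|^{−4} |u(x)|² dx ≤ C ∫_{ℝ^N} |Δu(x)|² dx. -/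
open Real MeasureTheory

/-- The Laplacian `Δu(x) = Σ_{i=1}^N ∂²u/∂x_i²(x)` of a function on `ℝ^N`. -/
noncomputable def laplacian {N : ℕ} (u : EuclideanSpace ℝ (Fin N) → ℂ)
    (x : EuclideanSpace ℝ (Fin N)) : ℂ :=
  ∑ i : Fin N, iteratedFDeriv ℝ 2 u x (fun _ => EuclideanSpace.single i (1 : ℝ))

section Rellich

variable {N : ℕ}

local notation "V" => EuclideanSpace ℝ (Fin N)

/-- standard basis vector -/
noncomputable def ee (N : ℕ) (i : Fin N) : EuclideanSpace ℝ (Fin N) :=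
  EuclideanSpace.single i (1 : ℝ)

variable {E F : Type*} [NormedAddCommGroup E] [NormedSpace ℝ E]
  [NormedAddCommGroup F] [NormedSpace ℝ F]

/-- directional derivative along `ee N i` -/
noncomputable def Dd (i : Fin N) (h : EuclideanSpace ℝ (Fin N) → E) :
    EuclideanSpace ℝ (Fin N) → E :=
  fun x => fderiv ℝ h x (ee N i)

/-- the Laplacian as a sum of iterated directional derivatives -/
noncomputable def Lap (h : EuclideanSpace ℝ (Fin N) → E) : EuclideanSpace ℝ (Fin N) → E :=
  fun x => ∑ i, Dd i (Dd i h) x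

theorem contDiff_Dd (i : Fin N) {h : V → E} (hh : ContDiff ℝ (⊤ : ℕ∞) h) :
    ContDiff ℝ (⊤ : ℕ∞) (Dd i h) :=
  (hh.fderiv_right (m := (⊤ : ℕ∞)) (by simp)).clm_apply contDiff_const

theorem hcs_Dd (i : Fin N) {h : V → E} (hh : HasCompactSupport h) :
    HasCompactSupport (Dd i h) :=
  hh.fderiv_apply ℝ (ee N i)

theorem contDiff_Lap {h : V → E} (hh : ContDiff ℝ (⊤ : ℕ∞) h) : ContDiff ℝ (⊤ : ℕ∞) (Lap h) :=
  ContDiff.sum fun i _ => contDiff_Dd i (contDiff_Dd i hh)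

theorem hcs_Lap {h : V → E} (hh : HasCompactSupport h) : HasCompactSupport (Lap h) := by
  have : ∀ (s : Finset (Fin N)), HasCompactSupport (fun x => ∑ i ∈ s, Dd i (Dd i h) x) := by
    intro s
    induction s using Finset.induction with
    | empty => simp only [Finset.sum_empty]; exact HasCompactSupport.zero
    | insert _ _ hi ih => simpa [Finset.sum_insert hi, Pi.add_def] using
        (hcs_Dd _ (hcs_Dd _ hh)).add ih
  exact this Finset.univ

theorem laplacian_eq {u : V → ℂ} (hu : ContDiff ℝ (⊤ : ℕ∞) u) (x : V) :
    laplacian u x = Lap u x := by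
  unfold laplacian Lap
  refine Finset.sum_congr rfl fun i _ => ?_
  rw [iteratedFDeriv_two_apply]
  have hdu : Differentiable ℝ (fderiv ℝ u) :=
    (hu.fderiv_right (m := (⊤ : ℕ∞)) (by simp)).differentiable (by simp)
  have : Dd i (Dd i u) x
      = fderiv ℝ (fun y => (fderiv ℝ u y) (ee N i)) x (ee N i) := rfl
  rw [this, fderiv_clm_apply (hdu x) (differentiableAt_const _)]
  simp [ee]

theorem clm_comp_Dd (q : E →L[ℝ] F) {h : V → E} (hh : Differentiable ℝ h) (i : Fin N) :
    Dd i (fun y => q (h y)) = fun y => q (Dd i h y) := by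
  funext y
  show fderiv ℝ (⇑q ∘ h) y (ee N i) = _
  rw [fderiv_comp y q.differentiableAt (hh y), q.fderiv]
  rfl

theorem clm_comp_Lap (q : E →L[ℝ] F) {h : V → E} (hh : ContDiff ℝ (⊤ : ℕ∞) h) (x : V) :
    Lap (fun y => q (h y)) x = q (Lap h x) := by
  unfold Lap
  rw [map_sum]
  refine Finset.sum_congr rfl fun i _ => ?_
  have hDd : ContDiff ℝ (⊤ : ℕ∞) (Dd i h) := contDiff_Dd i hh
  rw [clm_comp_Dd q (hh.differentiable (by simp)) i,
      clm_comp_Dd q (hDd.differentiable (by simp)) i]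

theorem Dd_mul {f g : V → ℝ} (hf : Differentiable ℝ f) (hg : Differentiable ℝ g) (i : Fin N) :
    Dd i (fun y => f y * g y) = fun x => Dd i f x * g x + f x * Dd i g x := by
  funext x
  have := ((hf x).hasFDerivAt.fun_mul (hg x).hasFDerivAt).fderiv
  show fderiv ℝ (fun y => f y * g y) x (ee N i) = _
  rw [this]; simp [Dd]; ring

theorem Lap_sq {f : V → ℝ} (hf : ContDiff ℝ (⊤ : ℕ∞) f) (x : V) :
    Lap (fun y => f y ^ 2) x
      = 2 * (∑ i, (Dd i f x) ^ 2) + 2 * f x * Lap f x := by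
  have hdf : Differentiable ℝ f := hf.differentiable (by simp)
  have hDd : ∀ i : Fin N, ContDiff ℝ (⊤ : ℕ∞) (Dd i f) := fun i => contDiff_Dd i hf
  have h1 : ∀ i : Fin N, Dd i (fun y => f y ^ 2) = fun x => Dd i f x * f x + f x * Dd i f x := by
    intro i
    have : (fun y => f y ^ 2) = fun y => f y * f y := by funext y; ring
    rw [this, Dd_mul hdf hdf]
  unfold Lap
  have h2 : ∀ i : Fin N, Dd i (Dd i (fun y => f y ^ 2)) x
      = (Dd i (Dd i f) x * f x + Dd i f x * Dd i f x)
        + (Dd i f x * Dd i f x + f x * Dd i (Dd i f) x) := by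
    intro i
    rw [h1 i]
    have ha : Differentiable ℝ (fun y => Dd i f y * f y) :=
      ((hDd i).differentiable (by simp)).mul hdf
    have hb : Differentiable ℝ (fun y => f y * Dd i f y) :=
      hdf.mul ((hDd i).differentiable (by simp))
    have : Dd i (fun y => Dd i f y * f y + f y * Dd i f y)
        = fun x => Dd i (fun y => Dd i f y * f y) x + Dd i (fun y => f y * Dd i f y) x := by
      funext z
      show fderiv ℝ _ z (ee N i) = _
      rw [fderiv_fun_add (ha z) (hb z)]
      rfl
    rw [this, Dd_mul ((hDd i).differentiable (by simp)) hdf,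
        Dd_mul hdf ((hDd i).differentiable (by simp))]
  rw [Finset.sum_congr rfl fun i _ => h2 i]
  simp only [Finset.sum_add_distrib, ← Finset.sum_mul, ← Finset.mul_sum, ← sq]
  show _ = 2 * (∑ i, Dd i f x ^ 2) + 2 * f x * (∑ i, Dd i (Dd i f) x)
  ring

theorem Lap_add {a b : V → ℝ} (ha : ContDiff ℝ (⊤ : ℕ∞) a) (hb : ContDiff ℝ (⊤ : ℕ∞) b) (x : V) :
    Lap (fun y => a y + b y) x = Lap a x + Lap b x := by
  have h1 : ∀ i : Fin N, Dd i (fun y => a y + b y) = fun z => Dd i a z + Dd i b z := by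
    intro i
    funext z
    show fderiv ℝ _ z (ee N i) = _
    rw [fderiv_fun_add (ha.differentiable (by simp) z) (hb.differentiable (by simp) z)]
    rfl
  unfold Lap
  rw [← Finset.sum_add_distrib]
  refine Finset.sum_congr rfl fun i _ => ?_
  rw [h1 i]
  show fderiv ℝ _ x (ee N i) = _
  rw [fderiv_fun_add ((contDiff_Dd i ha).differentiable (by simp) x)
    ((contDiff_Dd i hb).differentiable (by simp) x)]
  rfl

noncomputable def Qf (N : ℕ) (c : ℝ) : EuclideanSpace ℝ (Fin N) → ℝ :=
  fun x => (∑ j, x j ^ 2) + c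

noncomputable def Wf (N : ℕ) (c : ℝ) : EuclideanSpace ℝ (Fin N) → ℝ :=
  fun x => (Qf N c x)⁻¹

theorem Qf_pos {c : ℝ} (hc : 0 < c) (x : V) : 0 < Qf N c x :=
  add_pos_of_nonneg_of_pos (Finset.sum_nonneg fun j _ => sq_nonneg _) hc

theorem Qf_eq_norm {c : ℝ} (x : V) : Qf N c x = ‖x‖ ^ 2 + c := by
  rw [Qf, EuclideanSpace.norm_eq]
  rw [Real.sq_sqrt (Finset.sum_nonneg fun j _ => sq_nonneg _)]
  simp [sq_abs]

theorem hasFDerivAt_Qf (c : ℝ) (x : V) :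
    HasFDerivAt (Qf N c)
      (∑ j, (2 * x j) • (EuclideanSpace.proj j : EuclideanSpace ℝ (Fin N) →L[ℝ] ℝ)) x := by
  have h1 : ∀ j : Fin N, HasFDerivAt (fun y : V => y j ^ 2)
      ((2 * x j) • (EuclideanSpace.proj j : EuclideanSpace ℝ (Fin N) →L[ℝ] ℝ)) x := by
    intro j
    have hp : HasFDerivAt (fun y : V => y j)
        (EuclideanSpace.proj j : EuclideanSpace ℝ (Fin N) →L[ℝ] ℝ) x :=
      ((EuclideanSpace.proj j : EuclideanSpace ℝ (Fin N) →L[ℝ] ℝ)).hasFDerivAt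
    have := hp.fun_mul hp
    have heq : (fun y : V => y j * y j) = fun y : V => y j ^ 2 := by funext y; ring
    rw [heq] at this
    rw [two_mul, add_smul]
    exact this
  have := HasFDerivAt.fun_sum (fun j (_ : j ∈ Finset.univ) => h1 j)
  exact this.add_const c

theorem ee_apply (i j : Fin N) : (ee N i) j = if j = i then (1:ℝ) else 0 := by
  simp [ee, EuclideanSpace.single_apply]

theorem Qf_deriv_apply (c : ℝ) (x : V) (i : Fin N) :
    (∑ j, (2 * x j) • (EuclideanSpace.proj j : EuclideanSpace ℝ (Fin N) →L[ℝ] ℝ)) (ee N i)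
      = 2 * x i := by
  simp [ContinuousLinearMap.sum_apply, ee_apply, PiLp.proj_apply]

theorem Dd_Wf {c : ℝ} (hc : 0 < c) (i : Fin N) :
    Dd i (Wf N c) = fun x => -((Qf N c x ^ 2)⁻¹) * (2 * x i) := by
  funext x
  have hW : HasFDerivAt (Wf N c)
      ((-((Qf N c x ^ 2)⁻¹)) • (∑ j, (2 * x j) • (EuclideanSpace.proj j : EuclideanSpace ℝ (Fin N) →L[ℝ] ℝ))) x := by
    have := (hasDerivAt_inv (Qf_pos hc x).ne').comp_hasFDerivAt x (hasFDerivAt_Qf c x)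
    exact this
  show fderiv ℝ (Wf N c) x (ee N i) = _
  rw [hW.fderiv]
  simp only [ContinuousLinearMap.coe_smul', Pi.smul_apply, smul_eq_mul,
    ContinuousLinearMap.sum_apply, ContinuousLinearMap.smul_apply, PiLp.proj_apply,
    ee_apply, mul_ite, mul_one, mul_zero, Finset.sum_ite_eq', Finset.mem_univ, if_true]

theorem DdDd_Wf {c : ℝ} (hc : 0 < c) (i : Fin N) (x : V) :
    Dd i (Dd i (Wf N c)) x
      = 8 * x i ^ 2 * ((Qf N c x) ^ 3)⁻¹ - 2 * ((Qf N c x) ^ 2)⁻¹ := by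
  rw [Dd_Wf hc i]
  set q := Qf N c x with hq
  have hq0 : q ≠ 0 := (Qf_pos hc x).ne'
  -- derivative of A := fun y => -((Qf y ^2)⁻¹)
  have hA : HasFDerivAt (fun y : V => -((Qf N c y ^ 2)⁻¹))
      ((2 * q ^ 1 / (q ^ 2) ^ 2) • (∑ j, (2 * x j) • (EuclideanSpace.proj j : EuclideanSpace ℝ (Fin N) →L[ℝ] ℝ))) x := by
    have h2 : HasDerivAt (fun t : ℝ => -((t ^ 2)⁻¹)) (2 * q ^ 1 / (q ^ 2) ^ 2) q := by
      have := ((hasDerivAt_pow 2 q).fun_inv (pow_ne_zero 2 hq0)).fun_neg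
      refine this.congr_deriv ?_
      push_cast
      ring
    have := h2.comp_hasFDerivAt x (hasFDerivAt_Qf c x)
    exact this
  have hB : HasFDerivAt (fun y : V => 2 * y i)
      ((2:ℝ) • (EuclideanSpace.proj i : EuclideanSpace ℝ (Fin N) →L[ℝ] ℝ)) x :=
    ((EuclideanSpace.proj i : EuclideanSpace ℝ (Fin N) →L[ℝ] ℝ)).hasFDerivAt.const_mul 2
  have hAB := hA.fun_mul hB
  show fderiv ℝ _ x (ee N i) = _
  rw [hAB.fderiv]
  simp only [ContinuousLinearMap.add_apply, ContinuousLinearMap.coe_smul', Pi.smul_apply,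
    smul_eq_mul, ContinuousLinearMap.sum_apply, ContinuousLinearMap.smul_apply,
    PiLp.proj_apply, ee_apply, mul_ite, mul_one, mul_zero, Finset.sum_ite_eq',
    Finset.mem_univ, if_true]
  rw [← hq]
  field_simp
  ring

theorem Lap_Wf {c : ℝ} (hc : 0 < c) (x : V) :
    Lap (Wf N c) x
      = 8 * (Qf N c x - c) * ((Qf N c x) ^ 3)⁻¹ - 2 * N * ((Qf N c x) ^ 2)⁻¹ := by
  unfold Lap
  rw [Finset.sum_congr rfl fun i _ => DdDd_Wf hc i x]
  rw [Finset.sum_sub_distrib]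
  have h1 : (∑ i : Fin N, 8 * x i ^ 2 * ((Qf N c x) ^ 3)⁻¹)
      = 8 * (Qf N c x - c) * ((Qf N c x) ^ 3)⁻¹ := by
    rw [← Finset.sum_mul, ← Finset.mul_sum]
    have : (∑ i, x i ^ 2) = Qf N c x - c := by simp [Qf]
    rw [this]
  rw [h1]
  rw [Finset.sum_const, Finset.card_univ, Fintype.card_fin, nsmul_eq_mul]
  ring

theorem neg_Lap_Wf_ge {c : ℝ} (hc : 0 < c) (hN : 5 ≤ N) (x : V) :
    (2 * N - 8) * ((Qf N c x) ^ 2)⁻¹ ≤ -Lap (Wf N c) x := by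
  rw [Lap_Wf hc x]
  have hq : 0 < Qf N c x := Qf_pos hc x
  have hqc : c ≤ Qf N c x := by
    have : 0 ≤ ∑ j, x j ^ 2 := Finset.sum_nonneg fun j _ => sq_nonneg _
    simp [Qf]; linarith
  have hN' : (5:ℝ) ≤ N := by exact_mod_cast hN
  have h3 : -(8 * (Qf N c x - c) * ((Qf N c x) ^ 3)⁻¹ - 2 * N * ((Qf N c x) ^ 2)⁻¹)
      - (2 * N - 8) * ((Qf N c x) ^ 2)⁻¹ = 8 * c * ((Qf N c x) ^ 3)⁻¹ := by
    field_simp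
    ring
  have h4 : 0 ≤ 8 * c * ((Qf N c x) ^ 3)⁻¹ := by positivity
  linarith

theorem integral_dderiv_eq_zero
    (g : V → ℝ) (hg : ContDiff ℝ (⊤ : ℕ∞) g) (hgc : HasCompactSupport g) (v : V) :
    ∫ x, fderiv ℝ g x v = 0 := by
  obtain ⟨C, hC⟩ : ∃ C : ℝ, ∀ x, ‖fderiv ℝ g x‖ ≤ C := by
    obtain ⟨C, hC⟩ := (hgc.fderiv ℝ).isCompact.exists_bound_of_continuousOn
      ((hg.fderiv_right (m := (⊤ : ℕ∞)) (by simp)).continuous.continuousOn)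
    refine ⟨max C 0, fun x => ?_⟩
    by_cases hx : x ∈ tsupport (fderiv ℝ g)
    · exact (hC x hx).trans (le_max_left _ _)
    · simp [image_eq_zero_of_notMem_tsupport hx]
  have hlip : LipschitzWith (Real.toNNReal C) g := by
    apply lipschitzWith_of_nnnorm_fderiv_le (hg.differentiable (by simp))
    intro x
    simpa [← NNReal.coe_le_coe, Real.coe_toNNReal', le_max_iff] using Or.inl (hC x)
  have key := LipschitzWith.integral_lineDeriv_mul_eq (μ := volume)
    (LipschitzWith.const (b := (1:ℝ))) hlip hgc (-v)
  have h1 : ∀ x : V, lineDeriv ℝ (fun _ : V => (1:ℝ)) x (-v) = 0 := fun x =>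
    ((hasFDerivAt_const (1:ℝ) x).hasLineDerivAt (-v)).lineDeriv.trans (by simp)
  have h2 : ∀ x : V, lineDeriv ℝ g x v = fderiv ℝ g x v := fun x =>
    (hg.differentiable (by simp) x).lineDeriv_eq_fderiv
  simp only [h1, neg_neg, zero_mul, integral_zero, mul_one, h2] at key
  exact key.symm

theorem integrable_ccs {f : V → ℝ} (hf : Continuous f) (hfc : HasCompactSupport f) :
    Integrable f volume :=
  hf.integrable_of_hasCompactSupport hfc

theorem ibp {w φ : V → ℝ} (hw : ContDiff ℝ (⊤ : ℕ∞) w) (hφ : ContDiff ℝ (⊤ : ℕ∞) φ)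
    (hφc : HasCompactSupport φ) :
    ∫ x, Lap w x * φ x = ∫ x, w x * Lap φ x := by
  have hwd : Differentiable ℝ w := hw.differentiable (by simp)
  have hφd : Differentiable ℝ φ := hφ.differentiable (by simp)
  have key : ∀ i : Fin N, ∫ x, Dd i (Dd i w) x * φ x = ∫ x, w x * Dd i (Dd i φ) x := by
    intro i
    set g : V → ℝ := fun x => Dd i w x * φ x - w x * Dd i φ x with hgdef
    have hg : ContDiff ℝ (⊤ : ℕ∞) g := ((contDiff_Dd i hw).mul hφ).sub (hw.mul (contDiff_Dd i hφ))
    have hgc : HasCompactSupport g := by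
      have h1 : HasCompactSupport (fun x => Dd i w x * φ x) := hφc.mul_left
      have h2 : HasCompactSupport (fun x => w x * Dd i φ x) := (hcs_Dd i hφc).mul_left
      have h2' := h2.comp_left (g := fun t : ℝ => -t) neg_zero
      have := h1.add h2'
      simpa [hgdef, sub_eq_add_neg, Function.comp_def, Pi.add_def] using this
    have hdg : ∀ x, fderiv ℝ g x (ee N i)
        = Dd i (Dd i w) x * φ x - w x * Dd i (Dd i φ) x := by
      intro x
      have e1 : fderiv ℝ g x (ee N i)
          = Dd i (fun y => Dd i w y * φ y) x - Dd i (fun y => w y * Dd i φ y) x := by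
        show fderiv ℝ (fun y => Dd i w y * φ y - w y * Dd i φ y) x (ee N i) = _
        rw [fderiv_fun_sub (((contDiff_Dd i hw).mul hφ).differentiable (by simp) x)
          ((hw.mul (contDiff_Dd i hφ)).differentiable (by simp) x)]
        rfl
      rw [e1, Dd_mul ((contDiff_Dd i hw).differentiable (by simp)) hφd,
        Dd_mul hwd ((contDiff_Dd i hφ).differentiable (by simp))]
      ring
    have hzero : ∫ x, fderiv ℝ g x (ee N i) = 0 := integral_dderiv_eq_zero g hg hgc _
    rw [integral_congr_ae (Filter.Eventually.of_forall hdg)] at hzero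
    have ha : Integrable (fun x => Dd i (Dd i w) x * φ x) volume :=
      integrable_ccs ((contDiff_Dd i (contDiff_Dd i hw)).continuous.mul hφ.continuous)
        hφc.mul_left
    have hb : Integrable (fun x => w x * Dd i (Dd i φ) x) volume :=
      integrable_ccs (hw.continuous.mul (contDiff_Dd i (contDiff_Dd i hφ)).continuous)
        (hcs_Dd i (hcs_Dd i hφc)).mul_left
    rw [integral_sub ha hb] at hzero
    linarith
  have e1 : ∫ x, Lap w x * φ x = ∑ i, ∫ x, Dd i (Dd i w) x * φ x := by
    rw [← integral_finset_sum _ fun i _ =>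
      integrable_ccs ((contDiff_Dd i (contDiff_Dd i hw)).continuous.fun_mul hφ.continuous)
        hφc.mul_left]
    congr 1; funext x; rw [Lap, Finset.sum_mul]
  have e2 : ∫ x, w x * Lap φ x = ∑ i, ∫ x, w x * Dd i (Dd i φ) x := by
    rw [← integral_finset_sum _ fun i _ =>
      integrable_ccs (hw.continuous.fun_mul (contDiff_Dd i (contDiff_Dd i hφ)).continuous)
        (hcs_Dd i (hcs_Dd i hφc)).mul_left]
    congr 1; funext x; rw [Lap, Finset.mul_sum]
  rw [e1, e2]
  exact Finset.sum_congr rfl fun i _ => key i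

theorem contDiff_Qf (c : ℝ) : ContDiff ℝ (⊤ : ℕ∞) (Qf N c) := by
  have : ContDiff ℝ (⊤ : ℕ∞) (fun x : V => ∑ j, x j ^ 2) := by
    apply ContDiff.sum
    intro j _
    exact ((EuclideanSpace.proj j : EuclideanSpace ℝ (Fin N) →L[ℝ] ℝ)).contDiff.pow 2
  exact this.add contDiff_const

theorem contDiff_Wf {c : ℝ} (hc : 0 < c) : ContDiff ℝ (⊤ : ℕ∞) (Wf N c) :=
  (contDiff_Qf c).inv fun x => (Qf_pos hc x).ne'

theorem step_main (hN : 5 ≤ N) (u : V → ℂ) (hu : ContDiff ℝ (⊤ : ℕ∞) u)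
    (hu' : HasCompactSupport u) {c : ℝ} (hc : 0 < c) :
    ∫ x, ((‖x‖ ^ 2 + c) ^ 2)⁻¹ * ‖u x‖ ^ 2
      ≤ (((N : ℝ) - 4) ^ 2)⁻¹ * ∫ x, ‖laplacian u x‖ ^ 2 := by
  set f : V → ℝ := fun x => (u x).re with hfdef
  set g : V → ℝ := fun x => (u x).im with hgdef
  have hf : ContDiff ℝ (⊤ : ℕ∞) f := Complex.reCLM.contDiff.comp hu
  have hg : ContDiff ℝ (⊤ : ℕ∞) g := Complex.imCLM.contDiff.comp hu
  have hfc : HasCompactSupport f := by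
    have := hu'.comp_left (g := fun z : ℂ => z.re) rfl
    simpa [Function.comp_def] using this
  have hgc : HasCompactSupport g := by
    have := hu'.comp_left (g := fun z : ℂ => z.im) rfl
    simpa [Function.comp_def] using this
  have hnorm : ∀ x, ‖u x‖ ^ 2 = f x ^ 2 + g x ^ 2 := by
    intro x
    rw [Complex.sq_norm, Complex.normSq_apply]
    simp [hfdef, hgdef, sq]
  have hlap : ∀ x, ‖laplacian u x‖ ^ 2 = (Lap f x) ^ 2 + (Lap g x) ^ 2 := by
    intro x
    rw [laplacian_eq hu x]
    have hre : Lap f x = (Lap u x).re := by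
      have := clm_comp_Lap Complex.reCLM hu x
      simpa [hfdef] using this
    have him : Lap g x = (Lap u x).im := by
      have := clm_comp_Lap Complex.imCLM hu x
      simpa [hgdef] using this
    rw [hre, him, Complex.sq_norm, Complex.normSq_apply]
    simp [sq]
  set φ : V → ℝ := fun x => f x ^ 2 + g x ^ 2 with hφdef
  have hφ : ContDiff ℝ (⊤ : ℕ∞) φ := (hf.pow 2).add (hg.pow 2)
  have hφc : HasCompactSupport φ := by
    have hφeq : φ = (f * f + g * g) := by funext x; simp [hφdef, sq]
    rw [hφeq]
    exact (hfc.mul_left).add (hgc.mul_left)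
  have hφ0 : ∀ x, 0 ≤ φ x := fun x => by positivity
  have hq : ∀ x : V, 0 < Qf N c x := Qf_pos hc
  have hW0 : ∀ x : V, 0 ≤ Wf N c x := fun x => inv_nonneg.mpr (hq x).le
  have hWsm : ContDiff ℝ (⊤ : ℕ∞) (Wf N c) := contDiff_Wf hc
  have hδ : (0:ℝ) < (N:ℝ) - 4 := by
    have : (5:ℝ) ≤ N := by exact_mod_cast hN
    linarith
  -- pointwise bound on Lap φ
  have hLφ : ∀ x, 2 * (f x * Lap f x + g x * Lap g x) ≤ Lap φ x := by
    intro x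
    have h1 : Lap φ x = Lap (fun y => f y ^ 2) x + Lap (fun y => g y ^ 2) x :=
      Lap_add (hf.pow 2) (hg.pow 2) x
    rw [h1, Lap_sq hf x, Lap_sq hg x]
    have s1 : (0:ℝ) ≤ ∑ i, (Dd i f x) ^ 2 := Finset.sum_nonneg fun i _ => sq_nonneg _
    have s2 : (0:ℝ) ≤ ∑ i, (Dd i g x) ^ 2 := Finset.sum_nonneg fun i _ => sq_nonneg _
    nlinarith
  -- continuity facts
  have hqcont : Continuous (Qf N c) := (contDiff_Qf c).continuous
  have hq2inv : Continuous (fun x : V => ((Qf N c x) ^ 2)⁻¹) :=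
    (hqcont.pow 2).inv₀ fun x => pow_ne_zero 2 (hq x).ne'
  have hWcont : Continuous (Wf N c) := hWsm.continuous
  have hLWcont : Continuous (Lap (Wf N c)) := (contDiff_Lap hWsm).continuous
  have hLφcont : Continuous (Lap φ) := (contDiff_Lap hφ).continuous
  have hLfcont : Continuous (Lap f) := (contDiff_Lap hf).continuous
  have hLgcont : Continuous (Lap g) := (contDiff_Lap hg).continuous
  -- integrability facts
  have I1 : Integrable (fun x => ((Qf N c x) ^ 2)⁻¹ * φ x) volume :=
    integrable_ccs (hq2inv.mul hφ.continuous) hφc.mul_left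
  have I2 : Integrable (fun x => (-Lap (Wf N c) x) * φ x) volume :=
    integrable_ccs (hLWcont.neg.mul hφ.continuous) hφc.mul_left
  have I3 : Integrable (fun x => Wf N c x * Lap φ x) volume :=
    integrable_ccs (hWcont.mul hLφcont) (hcs_Lap hφc).mul_left
  have hinner_cs : HasCompactSupport (fun x => -(2 * (f x * Lap f x + g x * Lap g x))) := by
    have h1 : HasCompactSupport (fun x => f x * Lap f x) := hfc.mul_right
    have h2 : HasCompactSupport (fun x => g x * Lap g x) := hgc.mul_right
    have h3 := h1.add h2
    have := h3.comp_left (g := fun t : ℝ => -(2 * t)) (by norm_num)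
    simpa [Function.comp_def] using this
  have I4 : Integrable (fun x => Wf N c x * (-(2 * (f x * Lap f x + g x * Lap g x)))) volume := by
    refine integrable_ccs (hWcont.mul ?_) hinner_cs.mul_left
    exact (continuous_const.mul ((hf.continuous.mul hLfcont).add (hg.continuous.mul hLgcont))).neg
  have I6 : Integrable (fun x => (Lap f x) ^ 2 + (Lap g x) ^ 2) volume := by
    refine integrable_ccs ((hLfcont.pow 2).add (hLgcont.pow 2)) ?_
    have h1 := (hcs_Lap hfc).comp_left (g := fun t : ℝ => t ^ 2) (by norm_num)
    have h2 := (hcs_Lap hgc).comp_left (g := fun t : ℝ => t ^ 2) (by norm_num)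
    simpa [Function.comp_def, Pi.add_def] using h1.add h2
  set A : ℝ := ∫ x, ((Qf N c x) ^ 2)⁻¹ * φ x with hAdef
  set B : ℝ := ∫ x, (Lap f x) ^ 2 + (Lap g x) ^ 2 with hBdef
  -- step h1
  have h1 : (2 * (N:ℝ) - 8) * A ≤ ∫ x, (-Lap (Wf N c) x) * φ x := by
    rw [hAdef, ← integral_const_mul]
    refine integral_mono (I1.const_mul _) I2 fun x => ?_
    rw [← mul_assoc]
    exact mul_le_mul_of_nonneg_right (neg_Lap_Wf_ge hc hN x) (hφ0 x)
  have h2 : ∫ x, (-Lap (Wf N c) x) * φ x = -∫ x, Lap (Wf N c) x * φ x := by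
    simp_rw [neg_mul]
    exact integral_neg _
  have h3 : ∫ x, Lap (Wf N c) x * φ x = ∫ x, Wf N c x * Lap φ x := ibp hWsm hφ hφc
  have h4 : -∫ x, Wf N c x * Lap φ x
      ≤ ∫ x, Wf N c x * (-(2 * (f x * Lap f x + g x * Lap g x))) := by
    rw [← integral_neg]
    refine integral_mono I3.neg I4 fun x => ?_
    simp only [Pi.neg_apply]
    rw [← mul_neg]
    exact mul_le_mul_of_nonneg_left (neg_le_neg (hLφ x)) (hW0 x)
  have h5 : ∫ x, Wf N c x * (-(2 * (f x * Lap f x + g x * Lap g x)))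
      ≤ ∫ x, (((N:ℝ) - 4) * (((Qf N c x) ^ 2)⁻¹ * φ x)
          + ((N:ℝ) - 4)⁻¹ * ((Lap f x) ^ 2 + (Lap g x) ^ 2)) := by
    refine integral_mono I4 ((I1.const_mul _).add (I6.const_mul _)) fun x => ?_
    have ht : 0 < (Qf N c x)⁻¹ := inv_pos.mpr (hq x)
    have hWx : Wf N c x = (Qf N c x)⁻¹ := rfl
    have hq2 : ((Qf N c x) ^ 2)⁻¹ = ((Qf N c x)⁻¹) ^ 2 := (inv_pow _ _).symm
    rw [hWx, hq2, hφdef]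
    set t := (Qf N c x)⁻¹
    set δ := (N:ℝ) - 4
    have hδi : 0 < δ⁻¹ := inv_pos.mpr hδ
    have key : ∀ a F : ℝ, -(2 * (t * (a * F))) ≤ δ * (t ^ 2 * a ^ 2) + δ⁻¹ * F ^ 2 := by
      intro a F
      have h := sq_nonneg (δ * t * a + F)
      have expand : δ * (t ^ 2 * a ^ 2) + δ⁻¹ * F ^ 2 + 2 * (t * (a * F))
          = δ⁻¹ * ((δ * t * a + F) ^ 2) := by
        field_simp
        ring
      have h2 := mul_nonneg hδi.le h
      linarith
    have k1 := key (f x) (Lap f x)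
    have k2 := key (g x) (Lap g x)
    nlinarith [k1, k2]
  have h6 : ∫ x, (((N:ℝ) - 4) * (((Qf N c x) ^ 2)⁻¹ * φ x)
          + ((N:ℝ) - 4)⁻¹ * ((Lap f x) ^ 2 + (Lap g x) ^ 2))
      = ((N:ℝ) - 4) * A + ((N:ℝ) - 4)⁻¹ * B := by
    rw [integral_add (I1.const_mul _) (I6.const_mul _), integral_const_mul, integral_const_mul]
  have hmain : ((N:ℝ) - 4) * A ≤ ((N:ℝ) - 4)⁻¹ * B := by
    have := h1.trans (h2.le.trans ((neg_le_neg h3.ge).trans (h4.trans (h5.trans h6.le))))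
    linarith
  -- translate to goal
  have hgoalL : ∫ x, ((‖x‖ ^ 2 + c) ^ 2)⁻¹ * ‖u x‖ ^ 2 = A := by
    rw [hAdef]
    refine integral_congr_ae (Filter.Eventually.of_forall fun x => ?_)
    simp only [hnorm x, Qf_eq_norm, hφdef]
  have hgoalR : ∫ x, ‖laplacian u x‖ ^ 2 = B := by
    rw [hBdef]
    refine integral_congr_ae (Filter.Eventually.of_forall fun x => ?_)
    simpa using hlap x
  rw [hgoalL, hgoalR]
  have hA0 : A ≤ ((N:ℝ) - 4)⁻¹ * (((N:ℝ) - 4)⁻¹ * B) := by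
    have h := mul_le_mul_of_nonneg_left hmain (inv_pos.mpr hδ).le
    rwa [← mul_assoc, inv_mul_cancel₀ hδ.ne', one_mul] at h
  calc A ≤ ((N:ℝ) - 4)⁻¹ * (((N:ℝ) - 4)⁻¹ * B) := hA0
    _ = (((N:ℝ) - 4) ^ 2)⁻¹ * B := by rw [← mul_assoc, ← mul_inv, ← sq]

end Rellich

/-- Rellich inequality: for `N ≥ 5` there exists `C = C(N) > 0` such that
`∫ |x|^{-4} |u|² dx ≤ C ∫ |Δu|² dx` for all smooth compactly supported `u : ℝ^N → ℂ`. -/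
theorem stmt4 (N : ℕ) (hN : 5 ≤ N) :
    ∃ C : ℝ, 0 < C ∧ ∀ u : EuclideanSpace ℝ (Fin N) → ℂ,
      ContDiff ℝ (⊤ : ℕ∞) u → HasCompactSupport u →
      ∫ x, ‖x‖ ^ (-4 : ℝ) * ‖u x‖ ^ 2 ≤ C * ∫ x, ‖laplacian u x‖ ^ 2 := by
  have hδ : (0:ℝ) < (N:ℝ) - 4 := by
    have : (5:ℝ) ≤ N := by exact_mod_cast hN
    linarith
  refine ⟨(((N:ℝ) - 4) ^ 2)⁻¹, by positivity, ?_⟩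
  intro u hu hu'
  set B : ℝ := ∫ x : EuclideanSpace ℝ (Fin N), ‖laplacian u x‖ ^ 2 with hB
  set K : ℝ := (((N:ℝ) - 4) ^ 2)⁻¹ * B with hK
  have hB0 : (0:ℝ) ≤ B := integral_nonneg fun x => by positivity
  have hK0 : (0:ℝ) ≤ K := mul_nonneg (by positivity) hB0
  set F : ℕ → EuclideanSpace ℝ (Fin N) → ℝ :=
    fun n x => ((‖x‖ ^ 2 + ((n:ℝ) + 1)⁻¹) ^ 2)⁻¹ * ‖u x‖ ^ 2 with hF
  have hcn : ∀ n : ℕ, (0:ℝ) < ((n:ℝ) + 1)⁻¹ := fun n => by positivity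
  have hFle : ∀ n, ∫ x, F n x ≤ K := fun n => step_main hN u hu hu' (hcn n)
  have hFnn : ∀ n x, 0 ≤ F n x := fun n x => by positivity
  have hFcont : ∀ n, Continuous (F n) := by
    intro n
    have h1 : Continuous fun x : EuclideanSpace ℝ (Fin N) => ‖x‖ ^ 2 + ((n:ℝ) + 1)⁻¹ :=
      (continuous_norm.pow 2).add continuous_const
    exact ((h1.pow 2).inv₀ fun x => by simp only [Pi.pow_apply]; positivity).mul (hu.continuous.norm.pow 2)
  have hucs : HasCompactSupport (fun x : EuclideanSpace ℝ (Fin N) => ‖u x‖ ^ 2) := by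
    have := hu'.comp_left (g := fun z : ℂ => ‖z‖ ^ 2) (by simp)
    simpa [Function.comp_def] using this
  have hFint : ∀ n, Integrable (F n) volume := fun n =>
    integrable_ccs (hFcont n) hucs.mul_left
  have hmono : ∀ x : EuclideanSpace ℝ (Fin N), Monotone fun n => F n x := by
    intro x m n hmn
    have hmn' : (m:ℝ) ≤ n := Nat.cast_le.mpr hmn
    have h1 : ((n:ℝ) + 1)⁻¹ ≤ ((m:ℝ) + 1)⁻¹ := by
      apply inv_anti₀ (by positivity)
      linarith
    have hb : (0:ℝ) ≤ ‖x‖ ^ 2 + ((n:ℝ) + 1)⁻¹ := by positivity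
    have h2 : (‖x‖ ^ 2 + ((n:ℝ) + 1)⁻¹) ^ 2 ≤ (‖x‖ ^ 2 + ((m:ℝ) + 1)⁻¹) ^ 2 := by
      apply pow_le_pow_left₀ hb
      linarith
    have h3 : ((‖x‖ ^ 2 + ((m:ℝ) + 1)⁻¹) ^ 2)⁻¹ ≤ ((‖x‖ ^ 2 + ((n:ℝ) + 1)⁻¹) ^ 2)⁻¹ := by
      apply inv_anti₀ (by positivity)
      exact h2
    exact mul_le_mul_of_nonneg_right h3 (by positivity)
  set G : ℕ → EuclideanSpace ℝ (Fin N) → ENNReal :=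
    fun n x => ENNReal.ofReal (F n x) with hG
  have hGmeas : ∀ n, Measurable (G n) := fun n => (hFcont n).measurable.ennreal_ofReal
  have hGmono : Monotone G := fun m n hmn x => ENNReal.ofReal_le_ofReal (hmono x hmn)
  have hsup : ∫⁻ x, (⨆ n, G n x) = ⨆ n, ∫⁻ x, G n x := lintegral_iSup hGmeas hGmono
  have hGle : ∀ n, ∫⁻ x, G n x ≤ ENNReal.ofReal K := by
    intro n
    rw [hG]
    rw [← ofReal_integral_eq_lintegral_ofReal (hFint n)
      (Filter.Eventually.of_forall (hFnn n))]
    exact ENNReal.ofReal_le_ofReal (hFle n)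
  have hsuple : ∫⁻ x, (⨆ n, G n x) ≤ ENNReal.ofReal K := by
    rw [hsup]; exact iSup_le hGle
  set T : EuclideanSpace ℝ (Fin N) → ℝ := fun x => ‖x‖ ^ (-4 : ℝ) * ‖u x‖ ^ 2 with hT
  have hi0 : (0:ℕ) < N := by omega
  haveI : Nontrivial (EuclideanSpace ℝ (Fin N)) := by
    refine ⟨⟨EuclideanSpace.single ⟨0, hi0⟩ 1, 0, fun h => ?_⟩⟩
    have := congrArg (fun v : EuclideanSpace ℝ (Fin N) => v ⟨0, hi0⟩) h
    simp [EuclideanSpace.single_apply] at this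
  haveI : NullSingletonClass (volume : Measure (EuclideanSpace ℝ (Fin N))) := inferInstance
  have hae0 : ∀ᵐ x : EuclideanSpace ℝ (Fin N), x ≠ 0 := by
    rw [ae_iff]
    simp only [ne_eq, not_not, Set.setOf_eq_eq_singleton]
    exact measure_singleton 0
  have hTae : ∀ᵐ x : EuclideanSpace ℝ (Fin N), ENNReal.ofReal (T x) = ⨆ n, G n x := by
    filter_upwards [hae0] with x hx
    have hxn : (0:ℝ) < ‖x‖ := norm_pos_iff.mpr hx
    have hTx : T x = ((‖x‖ ^ 2) ^ 2)⁻¹ * ‖u x‖ ^ 2 := by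
      have h4 : ‖x‖ ^ (-4:ℝ) = (‖x‖ ^ (4:ℕ))⁻¹ := by
        rw [← Real.rpow_natCast ‖x‖ 4, ← Real.rpow_neg (norm_nonneg x)]
        norm_num
      show ‖x‖ ^ (-4:ℝ) * ‖u x‖ ^ 2 = _
      rw [h4, show ‖x‖ ^ (4:ℕ) = (‖x‖ ^ 2) ^ 2 by ring]
    have htend : Filter.Tendsto (fun n => F n x) Filter.atTop (nhds (T x)) := by
      rw [hTx]
      have hb : Filter.Tendsto (fun n : ℕ => ((n:ℝ) + 1)⁻¹) Filter.atTop (nhds 0) := by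
        simpa [one_div] using tendsto_one_div_add_atTop_nhds_zero_nat (𝕜 := ℝ)
      have h1 : Filter.Tendsto (fun n : ℕ => ‖x‖ ^ 2 + ((n:ℝ) + 1)⁻¹) Filter.atTop
          (nhds (‖x‖ ^ 2)) := by
        simpa using (tendsto_const_nhds (x := ‖x‖ ^ 2)).add hb
      have h2 := ((h1.pow 2).inv₀ (by positivity)).mul_const (‖u x‖ ^ 2)
      exact h2
    have hcv : Filter.Tendsto (fun n => G n x) Filter.atTop (nhds (ENNReal.ofReal (T x))) :=
      (ENNReal.continuous_ofReal.tendsto _).comp htend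
    have hcv2 : Filter.Tendsto (fun n => G n x) Filter.atTop (nhds (⨆ n, G n x)) :=
      tendsto_atTop_iSup fun m n hmn => ENNReal.ofReal_le_ofReal (hmono x hmn)
    exact tendsto_nhds_unique hcv hcv2
  have hTmeas : AEStronglyMeasurable T volume := by
    apply Measurable.aestronglyMeasurable
    exact (measurable_norm.pow_const (-4:ℝ)).mul (hu.continuous.norm.pow 2).measurable
  have hTint : ∫ x, T x = (∫⁻ x, ENNReal.ofReal (T x)).toReal :=
    integral_eq_lintegral_of_nonneg_ae
      (Filter.Eventually.of_forall fun x => by rw [hT]; positivity) hTmeas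
  have hfin : ∫⁻ x, ENNReal.ofReal (T x) ≤ ENNReal.ofReal K := by
    rw [lintegral_congr_ae hTae]
    exact hsuple
  show ∫ x, T x ≤ K
  rw [hTint]
  exact ENNReal.toReal_le_of_le_ofReal hK0 hfin
end

section
/- Let p > 0 and C₀ > 0, and define f : [0,∞) → ℝ by f(y) = y/2 − (C₀/(p+2)) y^{(p+2)/2}. For every δ ∈ (0,1) there exists δ₁ ∈ (0,1) such that for all y ∈ [0, C₀^{−2/p}]: if f(y) ≤ (1 − δ) · (p/(2(p+2))) C₀^{−2/p}, then y ≤ (1 − δ₁) C₀^{−2/p}. -/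
open Real

/-- Quantified inversion of `f(y) = y/2 - (C₀/(p+2)) y^{(p+2)/2}` on `[0, C₀^{-2/p}]`:
for every `δ ∈ (0,1)` there is `δ₁ ∈ (0,1)` such that if `y ∈ [0, C₀^{-2/p}]` and
`f(y) ≤ (1-δ)(p/(2(p+2))) C₀^{-2/p}`, then `y ≤ (1-δ₁) C₀^{-2/p}`. -/
theorem stmt10 (p C₀ : ℝ) (hp : 0 < p) (hC : 0 < C₀) (f : ℝ → ℝ)
    (hf : ∀ y, f y = y / 2 - C₀ / (p + 2) * y ^ ((p + 2) / 2)) :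
    ∀ δ : ℝ, 0 < δ → δ < 1 → ∃ δ₁ : ℝ, 0 < δ₁ ∧ δ₁ < 1 ∧
      ∀ y : ℝ, 0 ≤ y → y ≤ C₀ ^ (-2 / p) →
        f y ≤ (1 - δ) * (p / (2 * (p + 2)) * C₀ ^ (-2 / p)) →
        y ≤ (1 - δ₁) * C₀ ^ (-2 / p) := by
  intro δ hδ0 hδ1
  refine ⟨δ, hδ0, hδ1, ?_⟩
  intro y hy0 hyY hfy
  have hY : (0:ℝ) < C₀ ^ (-2 / p) := rpow_pos_of_pos hC _
  rcases eq_or_lt_of_le hy0 with h0 | h0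
  · rw [← h0]
    have h1δ : 0 ≤ 1 - δ := by linarith
    positivity
  -- key power estimate: y^{(p+2)/2} ≤ C₀⁻¹ * y
  have hsplit : y ^ ((p + 2) / 2) = y ^ (p / 2) * y := by
    rw [show (p + 2) / 2 = p / 2 + 1 by ring, rpow_add h0, rpow_one]
  have hpow : y ^ (p / 2) ≤ C₀⁻¹ := by
    calc y ^ (p / 2) ≤ (C₀ ^ (-2 / p)) ^ (p / 2) :=
          rpow_le_rpow hy0 hyY (by positivity)
      _ = C₀⁻¹ := by
          have he : (-2 / p) * (p / 2) = -1 := by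
            field_simp
          rw [← rpow_mul hC.le, he, rpow_neg_one]
  have hpow' : y ^ ((p + 2) / 2) ≤ C₀⁻¹ * y := by
    rw [hsplit]
    exact mul_le_mul_of_nonneg_right hpow h0.le
  have hcoef : 0 < C₀ / (p + 2) := by positivity
  have hlow : y * (p / (2 * (p + 2))) ≤ f y := by
    rw [hf y]
    have : C₀ / (p + 2) * y ^ ((p + 2) / 2) ≤ C₀ / (p + 2) * (C₀⁻¹ * y) :=
      mul_le_mul_of_nonneg_left hpow' hcoef.le
    have hC' : C₀ / (p + 2) * (C₀⁻¹ * y) = y / (p + 2) := by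
      field_simp
    have hT : C₀ / (p + 2) * y ^ ((p + 2) / 2) ≤ y / (p + 2) := hC' ▸ this
    have heq : y / 2 - y / (p + 2) = y * (p / (2 * (p + 2))) := by
      field_simp
      ring
    linarith
  have hkey : y * (p / (2 * (p + 2))) ≤ (1 - δ) * C₀ ^ (-2 / p) * (p / (2 * (p + 2))) := by
    calc y * (p / (2 * (p + 2))) ≤ f y := hlow
      _ ≤ (1 - δ) * (p / (2 * (p + 2)) * C₀ ^ (-2 / p)) := hfy
      _ = (1 - δ) * C₀ ^ (-2 / p) * (p / (2 * (p + 2))) := by ring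
  have hpos : 0 < p / (2 * (p + 2)) := by positivity
  exact le_of_mul_le_mul_right hkey hpos
end
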